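/- arXiv:2003.11720 — 5 statements merged into one kernel-verified Lean document; each statement's English description precedes it below -/
import Mathlib

section
/- For positive constants w, γ, c and any real δ > G(0), the equation G(p) = δ has a unique nonnegative root, where G(p) = w·log₂(1+pγ) − w(p+c)γ/((1+pγ)·ln 2). -/
/-!
Up to the positive factor `w / log 2`, `G` is `log (1 + pγ) - (p + c)γ / (1 + pγ)`, whose
derivative `γ² (p + c) / (1 + pγ)²` is positive for `p > 0` and which grows like `log p`.
So `G` is continuous, strictly increasing and unbounded on `[0, ∞)`, and the intermediate value
theorem gives exactly one root of `G p = δ` there.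
-/

open Real Set Filter

theorem StrictMonoOn.existsUnique_eq_of_tendsto_atTop {α β : Type*}
    [ConditionallyCompleteLinearOrder α] [TopologicalSpace α] [OrderTopology α] [DenselyOrdered α]
    [LinearOrder β] [TopologicalSpace β] [OrderClosedTopology β] {f : α → β} {a : α} {y : β}
    (hcont : ContinuousOn f (Ici a)) (hmono : StrictMonoOn f (Ici a))
    (htop : Tendsto f atTop atTop) (hy : f a ≤ y) :
    ∃! x, a ≤ x ∧ f x = y := by
  obtain ⟨x, hx, rfl⟩ := intermediate_value_Ici hcont htop hy
  exact ⟨x, ⟨hx, rfl⟩, fun x' ⟨hx', hfx⟩ => hmono.injOn hx' hx hfx⟩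

noncomputable def normalizedG (γ c p : ℝ) : ℝ :=
  log (1 + p * γ) - (p + c) * γ / (1 + p * γ)

theorem hasDerivAt_normalizedG {γ c p : ℝ} (hp : 0 < 1 + p * γ) :
    HasDerivAt (normalizedG γ c) (γ ^ 2 * (p + c) / (1 + p * γ) ^ 2) p := by
  have hlin : HasDerivAt (fun q => 1 + q * γ) γ p := by
    simpa using ((hasDerivAt_id p).mul_const γ).const_add 1
  have hnum : HasDerivAt (fun q => (q + c) * γ) γ p := by
    simpa using ((hasDerivAt_id p).add_const c).mul_const γ
  refine ((hlin.log hp.ne').sub (hnum.div hlin hp.ne')).congr_deriv ?_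
  field_simp
  ring

theorem continuousOn_normalizedG {γ : ℝ} (hγ : 0 ≤ γ) (c : ℝ) :
    ContinuousOn (normalizedG γ c) (Ici 0) := by
  intro p (hp : 0 ≤ p)
  exact (hasDerivAt_normalizedG (by positivity)).continuousAt.continuousWithinAt

theorem strictMonoOn_normalizedG {γ c : ℝ} (hγ : 0 < γ) (hc : 0 ≤ c) :
    StrictMonoOn (normalizedG γ c) (Ici 0) := by
  refine strictMonoOn_of_deriv_pos (convex_Ici 0) (continuousOn_normalizedG hγ.le c) ?_
  intro p hp
  rw [interior_Ici, mem_Ioi] at hp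
  rw [(hasDerivAt_normalizedG (by positivity)).deriv]
  have : 0 < p + c := by linarith
  positivity

theorem tendsto_normalizedG_atTop {γ c : ℝ} (hγ : 0 < γ) (hc : 0 ≤ c) :
    Tendsto (normalizedG γ c) atTop atTop := by
  have hlog : Tendsto (fun p => log (1 + p * γ) - (1 + c * γ)) atTop atTop :=
    tendsto_atTop_add_const_right _ _
      (tendsto_log_atTop.comp (tendsto_atTop_add_const_left _ 1 (tendsto_id.atTop_mul_const hγ)))
  refine tendsto_atTop_mono' _ ?_ hlog
  filter_upwards [eventually_ge_atTop 0] with p hp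
  have hpos : 0 < 1 + p * γ := by positivity
  have hfrac : (p + c) * γ / (1 + p * γ) ≤ 1 + c * γ := by
    rw [div_le_iff₀ hpos]
    nlinarith [mul_nonneg (mul_nonneg hc hp) (sq_nonneg γ)]
  unfold normalizedG
  linarith

theorem G_unique_root (w γ c δ : ℝ) (hw : 0 < w) (hγ : 0 < γ) (hc : 0 < c)
    (G : ℝ → ℝ)
    (hG : ∀ p, G p = w * Real.logb 2 (1 + p * γ) - w * (p + c) * γ / ((1 + p * γ) * Real.log 2))
    (hδ : G 0 < δ) :
    ∃! p : ℝ, 0 ≤ p ∧ G p = δ := by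
  have hk : 0 < w / log 2 := div_pos hw (log_pos one_lt_two)
  have hG_eq : G = fun p => w / log 2 * normalizedG γ c p := by
    funext p
    rw [hG, logb, normalizedG]
    field_simp
  rw [hG_eq] at hδ ⊢
  exact StrictMonoOn.existsUnique_eq_of_tendsto_atTop
    (continuousOn_const.mul (continuousOn_normalizedG hγ.le c))
    (fun a ha b hb hab => mul_lt_mul_of_pos_left (strictMonoOn_normalizedG hγ hc.le ha hb hab) hk)
    ((tendsto_normalizedG_atTop hγ hc.le).const_mul_atTop hk) hδ.le
end

section
/- When WPT is deactivated, the optimal device transmit power p_k(T) determined by G_k(p_k) = δ*(T) with Σ_j E_j/(p_j + c_j) = T is strictly decreasing in T: if T increases (with all E_k fixed), then every p_k decreases. -/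
/-!
Each `G k` is strictly increasing on `[0, ∞)`, its derivative being
`w γ² (p + c) / ((1 + p γ)² log 2) > 0`. So all powers solving `G k (p k) = δ` move in the same
direction as the common level `δ`: if `p k ≤ p' k` for a single `k`, then `δ ≤ δ'` and hence
`p ≤ p'` everywhere, which makes the total time `∑ E k / (p k + c k)` at `p'` at most the one at
`p`, contradicting `T < T'`.
-/

open Real Set Finset

noncomputable def marginalRate (w γ c p : ℝ) : ℝ :=
  w * logb 2 (1 + p * γ) - w * (p + c) * γ / ((1 + p * γ) * log 2)

lemma hasDerivAt_marginalRate (w : ℝ) {γ c p : ℝ} (hp : 0 < 1 + p * γ) :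
    HasDerivAt (marginalRate w γ c) (w * γ ^ 2 * (p + c) / ((1 + p * γ) ^ 2 * log 2)) p := by
  have hlin : HasDerivAt (fun q => 1 + q * γ) γ p := by
    simpa using ((hasDerivAt_id p).mul_const γ).const_add 1
  have hlog := ((hlin.log hp.ne').const_mul w).div_const (log 2)
  have hfrac := ((((hasDerivAt_id p).add_const c).const_mul w).mul_const γ).div
    (hlin.mul_const (log 2)) (by positivity)
  have hfun : marginalRate w γ c = (fun q => w * log (1 + q * γ) / log 2) -
      (fun q => w * (id q + c) * γ) / fun q => (1 + q * γ) * log 2 := by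
    funext q
    simp only [marginalRate, logb, Pi.sub_apply, Pi.div_apply, id]
    ring
  have hlog2 : log 2 ≠ 0 := (log_pos one_lt_two).ne'
  rw [hfun]
  refine (hlog.sub hfrac).congr_deriv ?_
  simp only [id]
  field_simp
  ring

lemma strictMonoOn_marginalRate {w γ c : ℝ} (hw : 0 < w) (hγ : 0 < γ) (hc : 0 < c) :
    StrictMonoOn (marginalRate w γ c) (Ici 0) := by
  have hpos : ∀ p ∈ Ici (0 : ℝ), 0 < 1 + p * γ := fun p hp =>
    by nlinarith [mul_nonneg (mem_Ici.mp hp) hγ.le]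
  refine strictMonoOn_of_deriv_pos (convex_Ici 0)
    (fun p hp => (hasDerivAt_marginalRate w (hpos p hp)).continuousAt.continuousWithinAt)
    fun p hp => ?_
  rw [interior_Ici] at hp
  have hp0 : 0 < p := hp
  rw [(hasDerivAt_marginalRate w (hpos p hp0.le)).deriv]
  have h1pγ := hpos p hp0.le
  have hlog2 : 0 < log 2 := log_pos one_lt_two
  have hpc : 0 < p + c := by linarith
  positivity

lemma le_of_common_level_of_strictMonoOn {ι α β : Type*} [LinearOrder α] [Preorder β]
    {f : ι → α → β} {s : Set α} (hf : ∀ i, StrictMonoOn (f i) s) {x y : ι → α}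
    (hx : ∀ i, x i ∈ s) (hy : ∀ i, y i ∈ s) {a b : β}
    (hfx : ∀ i, f i (x i) = a) (hfy : ∀ i, f i (y i) = b) {j : ι} (hj : x j ≤ y j) (i : ι) :
    x i ≤ y i := by
  have hab : a ≤ b := by
    rw [← hfx j, ← hfy j]
    exact (hf j).monotoneOn (hx j) (hy j) hj
  rw [← (hf i).le_iff_le (hx i) (hy i), hfx i, hfy i]
  exact hab

lemma sum_div_add_le_sum_div_add {ι : Type*} (s : Finset ι) {E c x y : ι → ℝ}
    (hE : ∀ i, 0 ≤ E i) (hx : ∀ i, 0 < x i + c i) (hxy : ∀ i, x i ≤ y i) :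
    ∑ i ∈ s, E i / (y i + c i) ≤ ∑ i ∈ s, E i / (x i + c i) :=
  sum_le_sum fun i _ => div_le_div_of_nonneg_left (hE i) (hx i) (by linarith [hxy i])

theorem power_decreasing_in_T (K : ℕ) (w γ c E : Fin K → ℝ)
    (hw : ∀ k, 0 < w k) (hγ : ∀ k, 0 < γ k) (hc : ∀ k, 0 < c k) (hE : ∀ k, 0 < E k)
    (G : Fin K → ℝ → ℝ)
    (hG : ∀ k p, G k p = w k * Real.logb 2 (1 + p * γ k)
        - w k * (p + c k) * γ k / ((1 + p * γ k) * Real.log 2))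
    (T T' δ δ' : ℝ) (p p' : Fin K → ℝ)
    (hTT' : T < T')
    (hp : ∀ k, 0 ≤ p k) (hp' : ∀ k, 0 ≤ p' k)
    (hroot : ∀ k, G k (p k) = δ) (hroot' : ∀ k, G k (p' k) = δ')
    (htime : ∑ k, E k / (p k + c k) = T) (htime' : ∑ k, E k / (p' k + c k) = T') :
    ∀ k, p' k < p k := by
  have hmono : ∀ k, StrictMonoOn (G k) (Ici 0) := fun k => by
    rw [show G k = marginalRate (w k) (γ k) (c k) from funext (hG k)]
    exact strictMonoOn_marginalRate (hw k) (hγ k) (hc k)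
  intro k
  by_contra! hk
  have hpp' := le_of_common_level_of_strictMonoOn hmono hp hp' hroot hroot' hk
  have hT'T : T' ≤ T := htime ▸ htime' ▸ sum_div_add_le_sum_div_add univ
    (fun i => (hE i).le) (fun i => add_pos_of_nonneg_of_pos (hp i) (hc i)) hpp'
  linarith
end

section
/- When WPT is deactivated, if all initial energies E_k are scaled up (each E_k increases) with T fixed, then the common dual value δ* increases and hence every optimal transmit power p_k increases. -/
/-!
Each `G k` is strictly increasing on `[0, ∞)`, its derivative being
`w k (p + c k) γ k ^ 2 / ((1 + p γ k) ^ 2 log 2) > 0`, so the powers move in the same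
direction as the dual value. If `δ' ≤ δ`, then `p' k ≤ p k` for every `k`, and with `E k < E' k` every term of the
second time budget strictly exceeds the corresponding term of the first, so the two sums cannot
both equal `T`. Hence `δ < δ'`, and strict monotonicity of `G k` gives `p k < p' k`.
-/

open Set Finset

lemma hasDerivAt_log_one_add_mul_sub_div {γ c x : ℝ} (hx : 0 < 1 + x * γ) :
    HasDerivAt (fun p : ℝ => Real.log (1 + p * γ) - (p + c) * γ / (1 + p * γ))
      ((x + c) * γ ^ 2 / (1 + x * γ) ^ 2) x := by
  have hden : HasDerivAt (fun p : ℝ => 1 + p * γ) γ x := by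
    simpa using ((hasDerivAt_id x).mul_const γ).const_add 1
  have hnum : HasDerivAt (fun p : ℝ => (p + c) * γ) γ x := by
    simpa using ((hasDerivAt_id x).add_const c).mul_const γ
  refine ((hden.log hx.ne').sub (hnum.div hden hx.ne')).congr_deriv ?_
  field_simp
  ring

lemma strictMonoOn_log_one_add_mul_sub_div {γ c : ℝ} (hγ : 0 < γ) (hc : 0 ≤ c) :
    StrictMonoOn (fun p : ℝ => Real.log (1 + p * γ) - (p + c) * γ / (1 + p * γ)) (Ici 0) := by
  have hpos : ∀ x ∈ Ici (0 : ℝ), 0 < 1 + x * γ := fun x hx => by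
    nlinarith [mul_nonneg (mem_Ici.mp hx) hγ.le]
  refine strictMonoOn_of_deriv_pos (convex_Ici 0) ?_ fun x hx => ?_
  · exact fun x hx => (hasDerivAt_log_one_add_mul_sub_div (c := c) (hpos x hx)).continuousAt
      |>.continuousWithinAt
  · rw [interior_Ici, Set.mem_Ioi] at hx
    have hden := hpos x (mem_Ici.mpr hx.le)
    rw [(hasDerivAt_log_one_add_mul_sub_div hden).deriv]
    exact div_pos (mul_pos (by linarith) (pow_pos hγ 2)) (pow_pos hden 2)

lemma strictMonoOn_mul_logb_sub_div {w γ c : ℝ} (hw : 0 < w) (hγ : 0 < γ) (hc : 0 ≤ c) :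
    StrictMonoOn (fun p : ℝ => w * Real.logb 2 (1 + p * γ)
      - w * (p + c) * γ / ((1 + p * γ) * Real.log 2)) (Ici 0) := by
  have hscale : 0 < w / Real.log 2 := div_pos hw (Real.log_pos one_lt_two)
  refine ((strictMono_mul_left_of_pos hscale).comp_strictMonoOn
    (strictMonoOn_log_one_add_mul_sub_div hγ hc)).congr fun p _ => ?_
  simp only [Function.comp_apply, Real.logb, div_eq_mul_inv, mul_inv]
  ring

lemma Finset.sum_div_lt_sum_div {ι : Type*} {s : Finset ι} (hs : s.Nonempty)
    {a a' b b' : ι → ℝ} (ha : ∀ i ∈ s, 0 ≤ a i) (haa' : ∀ i ∈ s, a i < a' i)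
    (hb' : ∀ i ∈ s, 0 < b' i) (hb'b : ∀ i ∈ s, b' i ≤ b i) :
    ∑ i ∈ s, a i / b i < ∑ i ∈ s, a' i / b' i :=
  sum_lt_sum_of_nonempty hs fun i hi =>
    calc a i / b i ≤ a i / b' i := div_le_div_of_nonneg_left (ha i hi) (hb' i hi) (hb'b i hi)
      _ < a' i / b' i := div_lt_div_of_pos_right (haa' i hi) (hb' i hi)

theorem power_increasing_in_energy (K : ℕ) (w γ c : Fin K → ℝ)
    (hw : ∀ k, 0 < w k) (hγ : ∀ k, 0 < γ k) (hc : ∀ k, 0 < c k)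
    (G : Fin K → ℝ → ℝ)
    (hG : ∀ k p, G k p = w k * Real.logb 2 (1 + p * γ k)
        - w k * (p + c k) * γ k / ((1 + p * γ k) * Real.log 2))
    (T δ δ' : ℝ) (hT : 0 < T) (E E' : Fin K → ℝ) (p p' : Fin K → ℝ)
    (hE : ∀ k, 0 < E k) (hEE' : ∀ k, E k < E' k)
    (hp : ∀ k, 0 ≤ p k) (hp' : ∀ k, 0 ≤ p' k)
    (hroot : ∀ k, G k (p k) = δ) (hroot' : ∀ k, G k (p' k) = δ')
    (htime : ∑ k, E k / (p k + c k) = T) (htime' : ∑ k, E' k / (p' k + c k) = T) :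
    δ < δ' ∧ ∀ k, p k < p' k := by
  have hmono : ∀ k, StrictMonoOn (G k) (Ici 0) := fun k =>
    (strictMonoOn_mul_logb_sub_div (hw k) (hγ k) (hc k).le).congr fun x _ => (hG k x).symm
  have hpow_lt_iff : ∀ k, p k < p' k ↔ δ < δ' := fun k => by
    rw [← hroot k, ← hroot' k]
    exact ((hmono k).lt_iff_lt (hp k) (hp' k)).symm
  have hδ : δ < δ' := by
    by_contra! hδ'
    have hpow_le : ∀ k, p' k ≤ p k := fun k =>
      ((hmono k).le_iff_le (hp' k) (hp k)).mp (by rwa [hroot k, hroot' k])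
    have hne : (univ : Finset (Fin K)).Nonempty := nonempty_of_sum_ne_zero (htime ▸ hT.ne')
    have htime_lt : ∑ k, E k / (p k + c k) < ∑ k, E' k / (p' k + c k) :=
      sum_div_lt_sum_div hne (fun k _ => (hE k).le) (fun k _ => hEE' k)
        (fun k _ => add_pos_of_nonneg_of_pos (hp' k) (hc k))
        (fun k _ => add_le_add_left (hpow_le k) (c k))
    linarith
  exact ⟨hδ, fun k => (hpow_lt_iff k).mpr hδ⟩
end

section
/- Define F(P) = T − Σ_k E_k/(p_k*(P) + c_k), where each p_k*(P) is the root of w_k·log₂(1+p γ_k) − w_k(p+c_k)γ_k/((1+pγ_k)ln 2) = P·ψ for fixed ψ > 0. Then F is monotonically increasing in P ≥ 0. -/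
open Real Set

lemma strictMonoOn_log_add_div {a b : ℝ} (hb : 0 < b) (hab : a ≤ b) :
    StrictMonoOn (fun u => log u + a / u) (Ici b) := by
  have hpos : ∀ x ∈ Ici b, 0 < x := fun x hx => hb.trans_le hx
  refine strictMonoOn_of_deriv_pos (convex_Ici b) ?_ fun x hx => ?_
  · exact (continuousOn_log.mono fun x hx => (hpos x hx).ne').add
      (continuousOn_const.div continuousOn_id fun x hx => (hpos x hx).ne')
  · rw [interior_Ici] at hx
    have hx0 : 0 < x := hb.trans hx
    have hderiv : HasDerivAt (fun u => log u + a / u) (x⁻¹ + (0 * x - a * 1) / x ^ 2) x :=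
      (hasDerivAt_log hx0.ne').add ((hasDerivAt_const x a).div (hasDerivAt_id x) hx0.ne')
    have hval : x⁻¹ + (0 * x - a * 1) / x ^ 2 = (x - a) / x ^ 2 := by field_simp; ring
    rw [hderiv.deriv, hval]
    exact div_pos (by linarith [mem_Ioi.mp hx]) (by positivity)

/-- The left-hand side of the equation defining `p_k*`. -/
noncomputable def marginalGap (w γ c p : ℝ) : ℝ :=
  w * logb 2 (1 + p * γ) - w * (p + c) * γ / ((1 + p * γ) * log 2)

lemma marginalGap_eq {w γ c p : ℝ} (hγ : 0 < γ) (hp : 0 ≤ p) :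
    marginalGap w γ c p = w / log 2 * (log (1 + p * γ) + (1 - c * γ) / (1 + p * γ) - 1) := by
  have hu : 0 < 1 + p * γ := by positivity
  have hl2 : 0 < log 2 := log_pos one_lt_two
  rw [marginalGap, logb]
  field_simp
  ring

/-- Writing `u = 1 + pγ ≥ 1`, the gap is an increasing affine image of `log u + (1 - cγ)/u`,
which increases on `u ≥ 1` since `1 - cγ < 1`. -/
lemma strictMonoOn_marginalGap {w γ c : ℝ} (hw : 0 < w) (hγ : 0 < γ) (hc : 0 < c) :
    StrictMonoOn (marginalGap w γ c) (Ici 0) := by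
  intro p hp q hq hpq
  have hu : ∀ r ∈ Ici (0 : ℝ), 1 + r * γ ∈ Ici 1 := fun r hr => by
    simpa using mul_nonneg (mem_Ici.mp hr) hγ.le
  have hphi := strictMonoOn_log_add_div one_pos (by nlinarith : 1 - c * γ ≤ 1)
    (hu p hp) (hu q hq) (by gcongr)
  rw [marginalGap_eq hγ hp, marginalGap_eq hγ hq]
  have hwl : 0 < w / log 2 := div_pos hw (log_pos one_lt_two)
  exact mul_lt_mul_of_pos_left (sub_lt_sub_right hphi 1) hwl

theorem F_increasing_in_P_general (K : ℕ) (w γ c E : Fin K → ℝ)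
    (hw : ∀ k, 0 < w k) (hγ : ∀ k, 0 < γ k) (hc : ∀ k, 0 < c k) (hE : ∀ k, 0 ≤ E k)
    (T ψ : ℝ) (hψ : 0 < ψ)
    (pstar : Fin K → ℝ → ℝ)
    (hpstar : ∀ k P, 0 ≤ P → 0 ≤ pstar k P ∧
      w k * Real.logb 2 (1 + pstar k P * γ k)
        - w k * (pstar k P + c k) * γ k / ((1 + pstar k P * γ k) * Real.log 2) = P * ψ)
    (F : ℝ → ℝ) (hF : ∀ P, F P = T - ∑ k, E k / (pstar k P + c k)) :
    MonotoneOn F (Set.Ici (0 : ℝ)) := by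
  have hpstar_mono : ∀ k, MonotoneOn (pstar k) (Ici 0) := by
    intro k P₁ h₁ P₂ h₂ h₁₂
    obtain ⟨hp₁, hgap₁⟩ := hpstar k P₁ h₁
    obtain ⟨hp₂, hgap₂⟩ := hpstar k P₂ h₂
    refine ((strictMonoOn_marginalGap (hw k) (hγ k) (hc k)).le_iff_le hp₁ hp₂).mp ?_
    change marginalGap _ _ _ _ = _ at hgap₁ hgap₂
    rw [hgap₁, hgap₂]
    exact mul_le_mul_of_nonneg_right h₁₂ hψ.le
  intro P₁ h₁ P₂ h₂ h₁₂
  rw [hF, hF]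
  gcongr with k
  · exact hE k
  · exact add_pos_of_nonneg_of_pos (hpstar k P₁ h₁).1 (hc k)
  · exact hpstar_mono k h₁ h₂ h₁₂

theorem F_increasing_in_P (K : ℕ) (w γ c E : Fin K → ℝ)
    (hw : ∀ k, 0 < w k) (hγ : ∀ k, 0 < γ k) (hc : ∀ k, 0 < c k) (hE : ∀ k, 0 ≤ E k)
    (T ψ : ℝ) (hT : 0 < T) (hψ : 0 < ψ)
    (pstar : Fin K → ℝ → ℝ)
    (hpstar : ∀ k P, 0 ≤ P → 0 ≤ pstar k P ∧
      w k * Real.logb 2 (1 + pstar k P * γ k)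
        - w k * (pstar k P + c k) * γ k / ((1 + pstar k P * γ k) * Real.log 2) = P * ψ)
    (F : ℝ → ℝ) (hF : ∀ P, F P = T - ∑ k, E k / (pstar k P + c k)) :
    MonotoneOn F (Set.Ici (0 : ℝ)) :=
  F_increasing_in_P_general K w γ c E hw hγ hc hE T ψ hψ pstar hpstar F hF
end

section
/- F(c₁,…,c_K) = T − Σ_k E_k/(p_k*(c_k) + c_k) is increasing in each circuit power c_k, where p_k*(c_k) solves w_k·log₂(1+pγ_k) − w_k(p+c_k)γ_k/((1+pγ_k)ln 2) = D for a fixed constant D ≥ 0; indeed the map c ↦ p*(c) + c is increasing. -/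
/-!
Put `u = 1 + p γ` and `L = D ln 2 / w`. Multiplying the defining equation by `ln 2 / w` and
clearing the denominator `u` turns it into `(p + c) γ = u (log u - L)`, so `u > exp L`, and
subtracting `p γ = u - 1` gives `c γ = u log u - (L + 1) u + 1`. The right-hand side has
derivative `log u - L > 0` on `u > exp L`, hence is strictly increasing there: a larger circuit
power `c` forces a larger `u`, i.e. a larger `p*(c)`, and a fortiori a larger `p*(c) + c`.
-/

open Real Set

lemma strictMonoOn_mul_log_sub_mul (L : ℝ) :
    StrictMonoOn (fun u => u * log u - (L + 1) * u) (Ici (exp L)) := by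
  refine strictMonoOn_of_deriv_pos (convex_Ici _) (by fun_prop) fun u hu => ?_
  rw [interior_Ici] at hu
  have hu0 : 0 < u := (exp_pos L).trans hu
  have hL : L < log u := (lt_log_iff_exp_lt hu0).mpr hu
  have hderiv : HasDerivAt (fun u => u * log u - (L + 1) * u) (log u + 1 - (L + 1)) u :=
    (hasDerivAt_mul_log hu0.ne').sub
      ((hasDerivAt_id u).const_mul (L + 1) |>.congr_deriv (mul_one _))
  rw [hderiv.deriv]
  linarith

lemma add_mul_eq_of_rate_eq {w γ p c D : ℝ} (hw : 0 < w) (hu : 0 < 1 + p * γ)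
    (h : w * logb 2 (1 + p * γ) - w * (p + c) * γ / ((1 + p * γ) * log 2) = D) :
    (p + c) * γ = (1 + p * γ) * (log (1 + p * γ) - D * log 2 / w) := by
  have hlog2 : 0 < log 2 := log_pos one_lt_two
  rw [← h, logb]
  field_simp
  ring

lemma exp_le_of_eq_mul_log_sub {x u L : ℝ} (hx : 0 < x) (hu : 0 < u)
    (h : x = u * (log u - L)) : exp L ≤ u := by
  rw [h] at hx
  have hL : 0 < log u - L := pos_of_mul_pos_right hx hu.le
  exact ((lt_log_iff_exp_lt hu).mp (by linarith)).le

lemma lt_of_rate_eq {w γ D p p' c c' : ℝ} (hw : 0 < w) (hγ : 0 < γ) (hp : 0 ≤ p)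
    (hp' : 0 ≤ p') (hc : 0 < c) (hcc' : c < c')
    (h : w * logb 2 (1 + p * γ) - w * (p + c) * γ / ((1 + p * γ) * log 2) = D)
    (h' : w * logb 2 (1 + p' * γ) - w * (p' + c') * γ / ((1 + p' * γ) * log 2) = D) :
    p < p' := by
  set L := D * log 2 / w
  have hc' : 0 < c' := hc.trans hcc'
  have hu : 0 < 1 + p * γ := by positivity
  have hu' : 0 < 1 + p' * γ := by positivity
  have e := add_mul_eq_of_rate_eq hw hu h
  have e' := add_mul_eq_of_rate_eq hw hu' h'
  have hψ : (1 + p * γ) * log (1 + p * γ) - (L + 1) * (1 + p * γ)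
      < (1 + p' * γ) * log (1 + p' * γ) - (L + 1) * (1 + p' * γ) := by
    linarith [mul_lt_mul_of_pos_right hcc' hγ]
  have huu' : 1 + p * γ < 1 + p' * γ := (strictMonoOn_mul_log_sub_mul L).lt_iff_lt
    (exp_le_of_eq_mul_log_sub (by positivity) hu e)
    (exp_le_of_eq_mul_log_sub (by positivity) hu' e') |>.mp hψ
  exact lt_of_mul_lt_mul_right (by linarith) hγ.le

theorem F_increasing_in_circuit_power_general (K : ℕ) (w γ E : Fin K → ℝ)
    (hw : ∀ k, 0 < w k) (hγ : ∀ k, 0 < γ k) (hE : ∀ k, 0 ≤ E k)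
    (T D : ℝ)
    (pstar : Fin K → ℝ → ℝ)
    (hpstar : ∀ k c, 0 < c → 0 ≤ pstar k c ∧
      w k * Real.logb 2 (1 + pstar k c * γ k)
        - w k * (pstar k c + c) * γ k / ((1 + pstar k c * γ k) * Real.log 2) = D)
    (c c' : Fin K → ℝ) (hc : ∀ k, 0 < c k) (hcc' : ∀ k, c k ≤ c' k) :
    (∀ k, c k < c' k → pstar k (c k) + c k < pstar k (c' k) + c' k) ∧
    T - ∑ k, E k / (pstar k (c k) + c k) ≤ T - ∑ k, E k / (pstar k (c' k) + c' k) := by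
  have hmono : ∀ k, c k < c' k → pstar k (c k) + c k < pstar k (c' k) + c' k := by
    intro k hk
    obtain ⟨hp, h⟩ := hpstar k (c k) (hc k)
    obtain ⟨hp', h'⟩ := hpstar k (c' k) ((hc k).trans hk)
    exact add_lt_add (lt_of_rate_eq (hw k) (hγ k) hp hp' (hc k) hk h h') hk
  refine ⟨hmono, ?_⟩
  gcongr T - ∑ k, E k / ?_ with k
  · exact hE k
  · linarith [(hpstar k (c k) (hc k)).1, hc k]
  · rcases (hcc' k).eq_or_lt with heq | hlt
    · rw [heq]
    · exact (hmono k hlt).le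

theorem F_increasing_in_circuit_power (K : ℕ) (w γ E : Fin K → ℝ)
    (hw : ∀ k, 0 < w k) (hγ : ∀ k, 0 < γ k) (hE : ∀ k, 0 ≤ E k)
    (T D : ℝ) (hD : 0 ≤ D)
    (pstar : Fin K → ℝ → ℝ)
    (hpstar : ∀ k c, 0 < c → 0 ≤ pstar k c ∧
      w k * Real.logb 2 (1 + pstar k c * γ k)
        - w k * (pstar k c + c) * γ k / ((1 + pstar k c * γ k) * Real.log 2) = D)
    (c c' : Fin K → ℝ) (hc : ∀ k, 0 < c k) (hcc' : ∀ k, c k ≤ c' k) :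
    (∀ k, c k < c' k → pstar k (c k) + c k < pstar k (c' k) + c' k) ∧
    T - ∑ k, E k / (pstar k (c k) + c k) ≤ T - ∑ k, E k / (pstar k (c' k) + c' k) :=
  F_increasing_in_circuit_power_general K w γ E hw hγ hE T D pstar hpstar c c' hc hcc'
end
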